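/- For the global cost C_G(θ) = 1 − ∏_{j=1}^n cos²(θ_j/2) with θ uniform on [0,2π]^n, the mean is E[C_G] = 1 − 2^{−n} and the variance is Var[C_G] = (3/8)^n − (1/4)^n, which vanishes exponentially in n. -/

import Mathlib

open MeasureTheory ProbabilityTheory Real

/-!
Writing `X = cos² (θ / 2)`, the cost is `1 - ∏ⱼ X(θⱼ)`, and under the product measure the
integral of a product of functions of distinct coordinates factorises. Hence the product has mean
`E[X]ⁿ = (1/2)ⁿ` and second moment `E[X²]ⁿ = (3/8)ⁿ`; the one-dimensional moments
`E[cos^(2k) (θ / 2)] = ∏_{i<k} (2i+1)/(2i+2)` come from Wallis' reduction formula on `[0, π]`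
after the substitution `x = θ / 2`.
-/

/-- The uniform probability measure on the cube [0, 2*pi]^m (the torus). -/
noncomputable def unifTorus (m : ℕ) : Measure (Fin m → ℝ) :=
  Measure.pi fun _ => (ENNReal.ofReal (2 * π))⁻¹ • volume.restrict (Set.Icc 0 (2 * π))

noncomputable def unifCircle : Measure ℝ :=
  (ENNReal.ofReal (2 * π))⁻¹ • volume.restrict (Set.Icc 0 (2 * π))

instance : IsProbabilityMeasure unifCircle := by
  constructor
  rw [unifCircle, Measure.smul_apply, Measure.restrict_apply_univ, Real.volume_Icc, sub_zero,
    smul_eq_mul, ENNReal.inv_mul_cancel]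
  · simpa using two_pi_pos
  · exact ENNReal.ofReal_ne_top

instance (n : ℕ) : IsProbabilityMeasure (unifTorus n) :=
  inferInstanceAs (IsProbabilityMeasure (Measure.pi fun _ => unifCircle))

theorem integral_unifCircle {E : Type*} [NormedAddCommGroup E] [NormedSpace ℝ E] (f : ℝ → E) :
    ∫ x, f x ∂unifCircle = (2 * π)⁻¹ • ∫ x in 0..2 * π, f x := by
  rw [unifCircle, integral_smul_measure, integral_Icc_eq_integral_Ioc,
    ← intervalIntegral.integral_of_le two_pi_pos.le, ENNReal.toReal_inv,
    ENNReal.toReal_ofReal two_pi_pos.le]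

theorem integral_unifTorus_prod {𝕜 : Type*} [RCLike 𝕜] (n : ℕ) (f : ℝ → 𝕜) :
    ∫ θ, ∏ j, f (θ j) ∂unifTorus n = (∫ x, f x ∂unifCircle) ^ n :=
  (integral_fintype_prod_eq_pow (μ := unifCircle) f).trans (by rw [Fintype.card_fin])

theorem integral_cos_pow_even_zero_pi (k : ℕ) :
    ∫ x in 0..π, cos x ^ (2 * k) = π * ∏ i ∈ Finset.range k, (2 * (i : ℝ) + 1) / (2 * i + 2) := by
  induction k with
  | zero => simp
  | succ k ih =>
    rw [Finset.prod_range_succ_comm, mul_left_comm, ← ih, Nat.mul_succ, integral_cos_pow]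
    push_cast
    simp only [sin_zero, sin_pi, mul_zero, sub_zero, zero_div, zero_add]

theorem integral_unifCircle_cos_half_pow_even (k : ℕ) :
    ∫ x, cos (x / 2) ^ (2 * k) ∂unifCircle
      = ∏ i ∈ Finset.range k, (2 * (i : ℝ) + 1) / (2 * i + 2) := by
  rw [integral_unifCircle, intervalIntegral.integral_comp_div (fun x => cos x ^ (2 * k))
    two_ne_zero, zero_div, mul_div_cancel_left₀ π two_ne_zero, integral_cos_pow_even_zero_pi,
    smul_eq_mul, smul_eq_mul]
  field_simp

theorem integral_unifTorus_prod_cos_half_pow_even (n k : ℕ) :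
    ∫ θ, ∏ j, cos (θ j / 2) ^ (2 * k) ∂unifTorus n
      = (∏ i ∈ Finset.range k, (2 * (i : ℝ) + 1) / (2 * i + 2)) ^ n := by
  rw [integral_unifTorus_prod n (fun x => cos (x / 2) ^ (2 * k)),
    integral_unifCircle_cos_half_pow_even]

theorem memLp_prod_cos_half_pow (n k : ℕ) (p : ENNReal) :
    MemLp (fun θ : Fin n → ℝ => ∏ j, cos (θ j / 2) ^ k) p (unifTorus n) := by
  refine MemLp.of_bound (by fun_prop : Continuous _).aestronglyMeasurable 1
    (Filter.Eventually.of_forall fun θ => ?_)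
  rw [Real.norm_eq_abs, Finset.abs_prod]
  exact Finset.prod_le_one (fun _ _ => abs_nonneg _)
    fun _ _ => (abs_pow _ k).trans_le (pow_le_one₀ (abs_nonneg _) (abs_cos_le_one _))

/-- For the global cost C_G(θ) = 1 - ∏ cos²(θⱼ/2) with θ uniform on [0,2π]^n,
the mean is 1 - 2⁻ⁿ and the variance is (3/8)^n - (1/4)^n (exponentially vanishing). -/
theorem mean_and_variance_global_cost (n : ℕ) :
    (∫ θ, (1 - ∏ j, Real.cos (θ j / 2) ^ 2) ∂(unifTorus n)
        = 1 - (1 / 2 : ℝ) ^ n) ∧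
    (variance (fun θ : Fin n → ℝ => 1 - ∏ j, Real.cos (θ j / 2) ^ 2) (unifTorus n)
        = (3 / 8 : ℝ) ^ n - (1 / 4 : ℝ) ^ n) := by
  set P : (Fin n → ℝ) → ℝ := fun θ => ∏ j, cos (θ j / 2) ^ 2 with hP
  have hP_memLp : MemLp P 2 (unifTorus n) := memLp_prod_cos_half_pow n 2 2
  have hP_mean : ∫ θ, P θ ∂unifTorus n = (1 / 2) ^ n := by
    simpa using integral_unifTorus_prod_cos_half_pow_even n 1
  have hP_sq : P ^ 2 = fun θ => ∏ j, cos (θ j / 2) ^ (2 * 2) := by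
    ext θ
    simp only [hP, Pi.pow_apply, ← Finset.prod_pow, ← pow_mul]
  have hP_sq_mean : ∫ θ, (P ^ 2) θ ∂unifTorus n = (3 / 8) ^ n := by
    rw [hP_sq, integral_unifTorus_prod_cos_half_pow_even]
    norm_num [Finset.prod_range_succ]
  constructor
  · rw [integral_sub (integrable_const 1) (hP_memLp.integrable one_le_two), integral_const,
      probReal_univ, hP_mean, one_smul]
  · rw [variance_const_sub hP_memLp.aestronglyMeasurable, variance_eq_sub hP_memLp,
      hP_sq_mean, hP_mean, ← pow_mul, mul_comm, pow_mul]
    norm_num
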